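/- arXiv:2510.25991 — 3 statements merged into one kernel-verified Lean document; each statement's English description precedes it below -/
import Mathlib

section
/- Let T be Hermitian positive definite with 2×2 block structure, T_rr and T_bb its diagonal blocks, and S = diag(T_rr⁻¹, T_bb⁻¹)·T. Suppose there is a constant c > 0 such that for every vector u = u_r ⊕ u_b, one has u_r*T_rr u_r + u_b*T_bb u_b ≤ c · u*Tu. Then the spectral radius of S⁻¹ is at most c. -/
open Matrix
open scoped ComplexOrder

/-- Stable splitting implies the spectral radius bound on `S⁻¹`: if `T` is Hermitian
positive definite with 2×2 block structure, `S = diag(T_rr⁻¹, T_bb⁻¹)·T`, and there is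
`c > 0` such that `u_r* T_rr u_r + u_b* T_bb u_b ≤ c · u* T u` for all `u = u_r ⊕ u_b`,
then `ρ(S⁻¹) ≤ c`. -/
theorem stmt_3 {m k : Type*} [Fintype m] [DecidableEq m] [Fintype k] [DecidableEq k]
    (Trr : Matrix m m ℂ) (Trb : Matrix m k ℂ) (Tbr : Matrix k m ℂ) (Tbb : Matrix k k ℂ)
    (hT : (Matrix.fromBlocks Trr Trb Tbr Tbb).PosDef)
    (c : ℝ) (hc : 0 < c)
    (hsplit : ∀ u : m ⊕ k → ℂ,
      (star (u ∘ Sum.inl) ⬝ᵥ (Trr *ᵥ (u ∘ Sum.inl))).re +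
      (star (u ∘ Sum.inr) ⬝ᵥ (Tbb *ᵥ (u ∘ Sum.inr))).re ≤
        c * (star u ⬝ᵥ (Matrix.fromBlocks Trr Trb Tbr Tbb *ᵥ u)).re) :
    spectralRadius ℂ ((Matrix.fromBlocks Trr⁻¹ 0 0 Tbb⁻¹ *
      Matrix.fromBlocks Trr Trb Tbr Tbb)⁻¹) ≤ ENNReal.ofReal c := by
  set T := Matrix.fromBlocks Trr Trb Tbr Tbb with hTdef
  -- diagonal blocks are positive definite
  have hrr : Trr.PosDef := by
    refine Matrix.PosDef.of_dotProduct_mulVec_pos (Matrix.isHermitian_fromBlocks_iff.mp hT.isHermitian).1 fun x hx => ?_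
    have hne : (Sum.elim x 0 : m ⊕ k → ℂ) ≠ 0 := by
      intro h
      apply hx
      ext i
      exact congrFun h (Sum.inl i)
    have := hT.dotProduct_mulVec_pos (x := Sum.elim x 0) hne
    have e1 : star (Sum.elim x (0 : k → ℂ)) ∘ Sum.inl = star x := rfl
    have e2 : star (Sum.elim x (0 : k → ℂ)) ∘ Sum.inr = 0 := by
      ext i; simp
    simpa [hTdef, Matrix.fromBlocks_mulVec, Matrix.dotProduct_block, e1, e2] using this
  have hbb : Tbb.PosDef := by
    refine Matrix.PosDef.of_dotProduct_mulVec_pos (Matrix.isHermitian_fromBlocks_iff.mp hT.isHermitian).2.2.2 fun x hx => ?_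
    have hne : (Sum.elim 0 x : m ⊕ k → ℂ) ≠ 0 := by
      intro h
      apply hx
      ext i
      exact congrFun h (Sum.inr i)
    have := hT.dotProduct_mulVec_pos (x := Sum.elim 0 x) hne
    have e1 : star (Sum.elim (0 : m → ℂ) x) ∘ Sum.inr = star x := rfl
    have e2 : star (Sum.elim (0 : m → ℂ) x) ∘ Sum.inl = 0 := by
      ext i; simp
    simpa [hTdef, Matrix.fromBlocks_mulVec, Matrix.dotProduct_block, e1, e2] using this
  have hdetrr : IsUnit Trr.det := (Matrix.isUnit_iff_isUnit_det _).mp hrr.isUnit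
  have hdetbb : IsUnit Tbb.det := (Matrix.isUnit_iff_isUnit_det _).mp hbb.isUnit
  set Dinv := Matrix.fromBlocks Trr⁻¹ 0 0 Tbb⁻¹ with hDinvdef
  set D := Matrix.fromBlocks Trr 0 0 Tbb with hDdef
  have hDDinv : D * Dinv = 1 := by
    rw [hDdef, hDinvdef, Matrix.fromBlocks_multiply]
    simp [Matrix.mul_nonsing_inv _ hdetrr, Matrix.mul_nonsing_inv _ hdetbb,
      Matrix.fromBlocks_one]
  have hDinvD : Dinv * D = 1 := by
    rw [hDdef, hDinvdef, Matrix.fromBlocks_multiply]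
    simp [Matrix.nonsing_inv_mul _ hdetrr, Matrix.nonsing_inv_mul _ hdetbb,
      Matrix.fromBlocks_one]
  have hDinvUnit : IsUnit Dinv := ⟨⟨Dinv, D, hDinvD, hDDinv⟩, rfl⟩
  have hSUnit : IsUnit (Dinv * T) := hDinvUnit.mul hT.isUnit
  have hSS : (Dinv * T) * (Dinv * T)⁻¹ = 1 :=
    Matrix.mul_nonsing_inv _ ((Matrix.isUnit_iff_isUnit_det _).mp hSUnit)
  simp only [spectralRadius]
  refine iSup₂_le fun μ hμ => ?_
  by_cases hμ0 : μ = 0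
  · simp [hμ0]
  -- extract an eigenvector
  have hdet : ((algebraMap ℂ (Matrix (m ⊕ k) (m ⊕ k) ℂ) μ) - (Dinv * T)⁻¹).det = 0 := by
    rw [spectrum.mem_iff] at hμ
    by_contra hne
    exact hμ ((Matrix.isUnit_iff_isUnit_det _).mpr (isUnit_iff_ne_zero.mpr hne))
  obtain ⟨v, hv, hveq⟩ := (Matrix.exists_mulVec_eq_zero_iff).mpr hdet
  have hMv : (Dinv * T)⁻¹ *ᵥ v = μ • v := by
    rw [Algebra.algebraMap_eq_smul_one, Matrix.sub_mulVec, Matrix.smul_mulVec,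
      Matrix.one_mulVec, sub_eq_zero] at hveq
    exact hveq.symm
  have hSv : μ • ((Dinv * T) *ᵥ v) = v := by
    calc μ • ((Dinv * T) *ᵥ v) = (Dinv * T) *ᵥ (μ • v) := (Matrix.mulVec_smul _ _ _).symm
      _ = (Dinv * T) *ᵥ ((Dinv * T)⁻¹ *ᵥ v) := by rw [hMv]
      _ = ((Dinv * T) * (Dinv * T)⁻¹) *ᵥ v := Matrix.mulVec_mulVec _ _ _
      _ = v := by rw [hSS, Matrix.one_mulVec]
  have hSv' : (Dinv * T) *ᵥ v = μ⁻¹ • v := by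
    have h2 := congrArg (fun w => μ⁻¹ • w) hSv
    simpa [smul_smul, inv_mul_cancel₀ hμ0] using h2
  have hTv : T *ᵥ v = μ⁻¹ • (D *ᵥ v) := by
    have h1 : D *ᵥ ((Dinv * T) *ᵥ v) = T *ᵥ v := by
      rw [Matrix.mulVec_mulVec, ← Matrix.mul_assoc, hDDinv, Matrix.one_mul]
    rw [← h1, hSv', Matrix.mulVec_smul]
  set a : ℂ := star v ⬝ᵥ (T *ᵥ v) with hadef
  set b : ℂ := star v ⬝ᵥ (D *ᵥ v) with hbdef
  have key : μ * a = b := by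
    rw [hadef, hTv, dotProduct_smul, smul_eq_mul, ← mul_assoc,
      mul_inv_cancel₀ hμ0, one_mul]
  have ha : 0 < a := hT.dotProduct_mulVec_pos hv
  have hare : 0 < a.re := (Complex.lt_def.mp ha).1
  have haim : a.im = 0 := ((Complex.lt_def.mp ha).2).symm
  have hb : b = (star (v ∘ Sum.inl) ⬝ᵥ (Trr *ᵥ (v ∘ Sum.inl))) +
      (star (v ∘ Sum.inr) ⬝ᵥ (Tbb *ᵥ (v ∘ Sum.inr))) := by
    have e1 : star v ∘ Sum.inl = star (v ∘ Sum.inl) := rfl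
    have e2 : star v ∘ Sum.inr = star (v ∘ Sum.inr) := rfl
    rw [hbdef, hDdef]
    simp [Matrix.fromBlocks_mulVec, Matrix.dotProduct_block, e1, e2]
  have hb0 : 0 ≤ b := by
    rw [hb]
    exact add_nonneg (hrr.posSemidef.dotProduct_mulVec_nonneg _) (hbb.posSemidef.dotProduct_mulVec_nonneg _)
  have hbre : 0 ≤ b.re := (Complex.le_def.mp hb0).1
  have hbim : b.im = 0 := ((Complex.le_def.mp hb0).2).symm
  have hsplitv := hsplit v
  have hbre_le : b.re ≤ c * a.re := by
    rw [hb, Complex.add_re] at *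
    exact hsplitv
  -- norms
  have hna : ‖a‖ = a.re := by
    have : a = (a.re : ℂ) := Complex.ext rfl (by simp [haim])
    rw [this]
    simp [Complex.norm_real, Real.norm_eq_abs, abs_of_pos hare]
  have hnb : ‖b‖ = b.re := by
    have : b = (b.re : ℂ) := Complex.ext rfl (by simp [hbim])
    rw [this]
    simp [Complex.norm_real, Real.norm_eq_abs, abs_of_nonneg hbre]
  have hnorm : ‖μ‖ * a.re = b.re := by
    rw [← hna, ← hnb, ← norm_mul, key]
  have hle : ‖μ‖ ≤ c := by
    rw [← hnorm] at hbre_le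
    exact le_of_mul_le_mul_right (by linarith) hare
  calc (‖μ‖₊ : ENNReal) = ENNReal.ofReal ‖μ‖ := (ofReal_norm μ).symm
    _ ≤ ENNReal.ofReal c := ENNReal.ofReal_le_ofReal hle
end

section
/- Let T be Hermitian positive definite with 2×2 block structure and D = diag(T_rr, T_bb). Then every eigenvalue λ of S = D⁻¹T satisfies 0 < λ ≤ 2. -/
open Matrix
open scoped ComplexOrder

/-- If `T` is Hermitian positive definite with 2×2 block structure and `D` is its block
diagonal part, then every eigenvalue `λ` of `S = D⁻¹T` satisfies `0 < λ ≤ 2`. -/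
theorem stmt_5 {m k : Type*} [Fintype m] [DecidableEq m] [Fintype k] [DecidableEq k]
    (Trr : Matrix m m ℂ) (Trb : Matrix m k ℂ) (Tbr : Matrix k m ℂ) (Tbb : Matrix k k ℂ)
    (hT : (Matrix.fromBlocks Trr Trb Tbr Tbb).PosDef) :
    ∀ μ ∈ spectrum ℂ ((Matrix.fromBlocks Trr 0 0 Tbb)⁻¹ * Matrix.fromBlocks Trr Trb Tbr Tbb),
      ∃ r : ℝ, μ = (r : ℂ) ∧ 0 < r ∧ r ≤ 2 := by
  set T : Matrix (m ⊕ k) (m ⊕ k) ℂ := Matrix.fromBlocks Trr Trb Tbr Tbb with hTdef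
  set D : Matrix (m ⊕ k) (m ⊕ k) ℂ := Matrix.fromBlocks Trr 0 0 Tbb with hDdef
  set J : Matrix (m ⊕ k) (m ⊕ k) ℂ := Matrix.fromBlocks 1 0 0 (-1) with hJdef
  have hJJ : J * J = 1 := by
    rw [hJdef, Matrix.fromBlocks_multiply]
    simp [Matrix.fromBlocks_one]
  have hJH : Jᴴ = J := by
    rw [hJdef, Matrix.fromBlocks_conjTranspose]
    simp
  have hsum : T + J * T * J = D + D := by
    rw [hTdef, hJdef, hDdef, Matrix.fromBlocks_multiply, Matrix.fromBlocks_multiply,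
      Matrix.fromBlocks_add, Matrix.fromBlocks_add]
    exact Matrix.fromBlocks_inj.mpr ⟨by simp [Matrix.mul_smul], by simp [Matrix.mul_smul],
      by simp [Matrix.mul_smul], by simp [Matrix.mul_smul]⟩
  -- quadratic form facts
  have key : ∀ v : (m ⊕ k) → ℂ, v ≠ 0 →
      ∃ a c : ℝ, 0 < a ∧ 0 < c ∧ star v ⬝ᵥ T *ᵥ v = (a : ℂ) ∧
        star v ⬝ᵥ D *ᵥ v = (((a + c) / 2 : ℝ) : ℂ) := by
    intro v hv
    have ha := hT.dotProduct_mulVec_pos hv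
    have hJv : J *ᵥ v ≠ 0 := by
      intro h
      apply hv
      have : J *ᵥ (J *ᵥ v) = v := by rw [Matrix.mulVec_mulVec, hJJ, Matrix.one_mulVec]
      rw [h, Matrix.mulVec_zero] at this
      exact this.symm
    have hc := hT.dotProduct_mulVec_pos hJv
    have hcrw : star (J *ᵥ v) ⬝ᵥ T *ᵥ (J *ᵥ v) = star v ⬝ᵥ (J * T * J) *ᵥ v := by
      rw [Matrix.star_mulVec, hJH, Matrix.mulVec_mulVec, ← Matrix.dotProduct_mulVec,
        Matrix.mulVec_mulVec, Matrix.mul_assoc]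
    rw [hcrw] at hc
    have hbsum : star v ⬝ᵥ T *ᵥ v + star v ⬝ᵥ (J * T * J) *ᵥ v
        = star v ⬝ᵥ D *ᵥ v + star v ⬝ᵥ D *ᵥ v := by
      rw [← dotProduct_add, ← Matrix.add_mulVec, hsum, Matrix.add_mulVec,
        dotProduct_add]
    set a' := star v ⬝ᵥ T *ᵥ v
    set c' := star v ⬝ᵥ (J * T * J) *ᵥ v
    set b' := star v ⬝ᵥ D *ᵥ v
    rw [Complex.lt_def] at ha hc
    have h1 : a' = (a'.re : ℂ) := Complex.ext (by simp) (by simp [← ha.2])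
    have h2 : c' = (c'.re : ℂ) := Complex.ext (by simp) (by simp [← hc.2])
    refine ⟨a'.re, c'.re, by simpa using ha.1, by simpa using hc.1, h1, ?_⟩
    have h2b : (2 : ℂ) * b' = (a'.re : ℂ) + (c'.re : ℂ) := by
      linear_combination -hbsum + h1 + h2
    push_cast
    linear_combination h2b / 2
  -- D is positive definite
  have hDH : D.IsHermitian := by
    have h := hT.1
    rw [Matrix.IsHermitian, hTdef, Matrix.fromBlocks_conjTranspose] at h
    have h11 : Trrᴴ = Trr := by
      have := congrArg Matrix.toBlocks₁₁ h
      simpa [Matrix.toBlocks_fromBlocks₁₁] using this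
    have h22 : Tbbᴴ = Tbb := by
      have := congrArg Matrix.toBlocks₂₂ h
      simpa [Matrix.toBlocks_fromBlocks₂₂] using this
    rw [Matrix.IsHermitian, hDdef, Matrix.fromBlocks_conjTranspose]
    simp [h11, h22]
  have hD : D.PosDef := by
    refine Matrix.PosDef.of_dotProduct_mulVec_pos hDH (fun v hv => ?_)
    obtain ⟨a, c, ha, hc, -, hb⟩ := key v hv
    rw [hb, Complex.lt_def]
    constructor
    · simpa using by positivity
    · simp
  -- main argument
  intro μ hμ
  rw [spectrum.mem_iff] at hμ
  have hdet : ((algebraMap ℂ (Matrix (m ⊕ k) (m ⊕ k) ℂ)) μ - D⁻¹ * T).det = 0 := by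
    by_contra h
    exact hμ ((Matrix.isUnit_iff_isUnit_det _).mpr (isUnit_iff_ne_zero.mpr h))
  obtain ⟨v, hv, hveq⟩ := (Matrix.exists_mulVec_eq_zero_iff).mpr hdet
  have heig : (D⁻¹ * T) *ᵥ v = μ • v := by
    have : (algebraMap ℂ (Matrix (m ⊕ k) (m ⊕ k) ℂ)) μ *ᵥ v - (D⁻¹ * T) *ᵥ v = 0 := by
      rw [← Matrix.sub_mulVec]; exact hveq
    have h2 : (algebraMap ℂ (Matrix (m ⊕ k) (m ⊕ k) ℂ)) μ *ᵥ v = μ • v := by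
      rw [Algebra.algebraMap_eq_smul_one, Matrix.smul_mulVec, Matrix.one_mulVec]
    rw [sub_eq_zero] at this
    rw [← this, h2]
  have hTv : T *ᵥ v = μ • (D *ᵥ v) := by
    have := congrArg (fun w => D *ᵥ w) heig
    simp only [Matrix.mulVec_mulVec] at this
    rw [← Matrix.mul_assoc, Matrix.mul_nonsing_inv _ (isUnit_iff_ne_zero.mpr hD.det_pos.ne'),
      Matrix.one_mul] at this
    rw [this, Matrix.mulVec_smul]
  obtain ⟨a, c, ha, hc, haT, hbD⟩ := key v hv
  have hab : (a : ℂ) = μ * (((a + c) / 2 : ℝ) : ℂ) := by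
    rw [← haT, ← hbD, hTv, dotProduct_smul, smul_eq_mul]
  have hden : (0 : ℝ) < (a + c) / 2 := by positivity
  refine ⟨a / ((a + c) / 2), ?_, by positivity, ?_⟩
  · have : ((a : ℝ) : ℂ) / (((a + c) / 2 : ℝ) : ℂ) = μ := by
      rw [hab]; field_simp
    rw [← this]; push_cast; ring
  · rw [div_le_iff₀ hden]; linarith
end

section
/- Let P₁, P₂ be T-orthogonal projectors with respect to a Hermitian positive definite matrix T, and suppose range(P₁) ∩ range(P₂) = {0} and range(P₁) + range(P₂) = ℂⁿ. Then S = P₁ + P₂ is invertible. -/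
open Matrix
open scoped ComplexOrder

/-- If `P₁`, `P₂` are `T`-orthogonal projectors with respect to a Hermitian positive
definite matrix `T`, whose ranges intersect trivially and together span `ℂⁿ`, then
`S = P₁ + P₂` is invertible. -/
theorem stmt_19 {n : Type*} [Fintype n] [DecidableEq n]
    (T P₁ P₂ : Matrix n n ℂ) (hT : T.PosDef)
    (hP₁ : P₁ * P₁ = P₁) (hP₁T : P₁ᴴ * T = T * P₁)
    (hP₂ : P₂ * P₂ = P₂) (hP₂T : P₂ᴴ * T = T * P₂)
    (hinf : LinearMap.range P₁.mulVecLin ⊓ LinearMap.range P₂.mulVecLin = ⊥)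
    (hsup : LinearMap.range P₁.mulVecLin ⊔ LinearMap.range P₂.mulVecLin = ⊤) :
    IsUnit (P₁ + P₂) := by
  rw [← Matrix.mulVec_injective_iff_isUnit]
  rw [← Matrix.coe_mulVecLin, injective_iff_map_eq_zero]
  intro x hx
  rw [Matrix.mulVecLin_apply, Matrix.add_mulVec] at hx
  -- P₁ x = -(P₂ x), both in the intersection of ranges, hence zero
  have h1 : P₁ *ᵥ x = 0 := by
    have hmem : P₁ *ᵥ x ∈ LinearMap.range P₁.mulVecLin ⊓ LinearMap.range P₂.mulVecLin := by
      refine ⟨⟨x, rfl⟩, ?_⟩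
      have h : P₁ *ᵥ x = -(P₂ *ᵥ x) := by
        rw [eq_neg_iff_add_eq_zero]; exact hx
      rw [h]
      exact neg_mem ⟨x, rfl⟩
    rwa [hinf, Submodule.mem_bot] at hmem
  have h2 : P₂ *ᵥ x = 0 := by
    rw [h1, zero_add] at hx; exact hx
  -- x is T-orthogonal to both ranges, hence to everything, hence zero
  have key : ∀ (P : Matrix n n ℂ), Pᴴ * T = T * P → P *ᵥ x = 0 →
      ∀ y ∈ LinearMap.range P.mulVecLin, star x ⬝ᵥ T *ᵥ y = 0 := by
    rintro P hPT hPx y ⟨u, rfl⟩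
    rw [Matrix.mulVecLin_apply, Matrix.mulVec_mulVec, ← hPT,
      Matrix.dotProduct_mulVec, ← Matrix.vecMul_vecMul,
      ← Matrix.star_mulVec, hPx, star_zero, Matrix.zero_vecMul, zero_dotProduct]
  have hx0 : star x ⬝ᵥ T *ᵥ x = 0 := by
    have hxtop : x ∈ LinearMap.range P₁.mulVecLin ⊔ LinearMap.range P₂.mulVecLin := by
      rw [hsup]; trivial
    obtain ⟨a, ha, b, hb, hab⟩ := Submodule.mem_sup.mp hxtop
    nth_rewrite 2 [← hab]
    rw [Matrix.mulVec_add, dotProduct_add,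
      key P₁ hP₁T h1 a ha, key P₂ hP₂T h2 b hb, add_zero]
  by_contra hne
  exact (hT.dotProduct_mulVec_pos hne).ne' hx0
end
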